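/- arXiv:1210.3799 — 5 statements merged into one kernel-verified Lean document; each statement's English description precedes it below -/
import Mathlib

section
/- For every n ≥ 1, there exist nonnegative integers γ_{n,i} (for 1 ≤ i ≤ ⌈n/2⌉) such that A_n(t) = Σ_{i=1}^{⌈n/2⌉} γ_{n,i} · t^i · (1+t)^{n+1-2i}. -/
/-!
Inserting the new largest letter `n + 1` into the one-line notation of `σ ∈ S_n` creates a new
descent unless it goes at the end or into a descent of `σ`; there are `des σ + 1` such slots,
which gives the recurrence `A_{n+1} = (t - t²) A_n' + (n + 1) t A_n`. The operator on the right
sends `t^i (1 + t)^(n+1-2i)` to `i t^i (1 + t)^(n+2-2i) + 2 (n + 1 - 2i) t^(i+1) (1 + t)^(n-2i)`,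
so it maps the nonnegative combinations of the `γ`-basis for `n` into those for `n + 1`, and
`γ`-nonnegativity propagates from `A_1 = t`.
-/

/-- Number of descents of a permutation of `Fin n`. -/
def des {n : ℕ} (π : Equiv.Perm (Fin n)) : ℕ :=
  (Finset.univ.filter fun i : Fin n => (i : ℕ) + 1 < n ∧ π (finRotate n i) < π i).card

/-- The Eulerian polynomial `A_n(t) = Σ_{π ∈ S_n} t^(des π + 1)`. -/
noncomputable def eulerianPoly (n : ℕ) : Polynomial ℤ :=
  ∑ π : Equiv.Perm (Fin n), Polynomial.X ^ (des π + 1)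

open Finset Polynomial

lemma AddSubmonoid.exists_eq_sum_nsmul_of_mem_closure_image {ι M : Type*} [AddCommMonoid M]
    {s : Finset ι} {f : ι → M} {x : M} (hx : x ∈ AddSubmonoid.closure (f '' s)) :
    ∃ c : ι → ℕ, x = ∑ i ∈ s, c i • f i := by
  classical
  induction hx using AddSubmonoid.closure_induction with
  | mem _ hy =>
    obtain ⟨i, hi, rfl⟩ := hy
    exact ⟨Pi.single i 1, by simp [Pi.single_apply, mem_coe.mp hi]⟩
  | zero => exact ⟨0, by simp⟩
  | add _ _ _ _ hy hz =>
    obtain ⟨c, rfl⟩ := hy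
    obtain ⟨d, rfl⟩ := hz
    exact ⟨c + d, by simp [add_nsmul, sum_add_distrib]⟩

/-- The number of descents of the word `w 0, …, w n` of length `n + 1`. -/
def wordDescents (w : ℕ → ℕ) (n : ℕ) : ℕ :=
  ∑ i ∈ range n, if w (i + 1) < w i then 1 else 0

def insertAt (w : ℕ → ℕ) (j M : ℕ) : ℕ → ℕ := fun i =>
  if i < j then w i else if i = j then M else w (i - 1)

/-- The positions at which inserting a letter larger than all of `w 0, …, w n` creates no new
descent: the end of the word and the bottoms of its descents. -/
def quietSlots (w : ℕ → ℕ) (n : ℕ) : Finset ℕ :=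
  (range (n + 2)).filter fun j => j = n + 1 ∨ 0 < j ∧ w j < w (j - 1)

section Words

variable {w w' : ℕ → ℕ} {n j M : ℕ}

lemma wordDescents_congr (h : ∀ i ≤ n, w i = w' i) : wordDescents w n = wordDescents w' n :=
  sum_congr rfl fun i hi => by
    rw [h i (by simp at hi; omega), h (i + 1) (by simp at hi; omega)]

lemma wordDescents_succ :
    wordDescents w (n + 1) = wordDescents w n + if w (n + 1) < w n then 1 else 0 :=
  sum_range_succ _ _

lemma card_quietSlots : #(quietSlots w n) = wordDescents w n + 1 := by
  rw [quietSlots, card_filter, sum_range_succ, sum_range_succ', wordDescents]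
  congr 1
  · rw [if_neg (by omega), add_zero]
    refine sum_congr rfl fun i hi => ?_
    simp [(mem_range.mp hi).ne]
  · simp

lemma wordDescents_insertAt_end (hM : w n < M) :
    wordDescents (insertAt w (n + 1) M) (n + 1) = wordDescents w n := by
  rw [wordDescents_succ, wordDescents_congr (w' := w) fun i hi => by simp [insertAt]; omega]
  simp [insertAt, hM.not_gt]

lemma wordDescents_insertAt (hj : j ≤ n + 1) (hM : ∀ i ≤ n, w i < M) :
    wordDescents (insertAt w j M) (n + 1) =
      wordDescents w n + if j ∈ quietSlots w n then 0 else 1 := by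
  rcases hj.eq_or_lt with rfl | hlt
  · simp [wordDescents_insertAt_end (hM n le_rfl), quietSlots]
  induction n with
  | zero =>
    obtain rfl : j = 0 := by omega
    simp [wordDescents, insertAt, quietSlots, filter_singleton, hM 0 le_rfl]
  | succ k ih =>
    rw [wordDescents_succ, wordDescents_succ (w := w)]
    rcases (Nat.lt_succ_iff.mp hlt).eq_or_lt with rfl | hjk
    · have hQ : k + 1 ∈ quietSlots w (k + 1) ↔ w (k + 1) < w k := by simp [quietSlots]
      rw [wordDescents_insertAt_end (hM k (by omega))]
      simp only [insertAt, lt_irrefl, if_false, if_true, Nat.add_sub_cancel, hQ,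
        if_neg (show ¬k + 2 < k + 1 by omega), if_neg (show k + 2 ≠ k + 1 by omega),
        if_pos (hM (k + 1) le_rfl)]
      split_ifs <;> omega
    · have hQ : j ∈ quietSlots w k ↔ j ∈ quietSlots w (k + 1) := by
        simp only [quietSlots, mem_filter, mem_range]
        omega
      rw [ih (by omega) (fun i hi => hM i (by omega)) hjk]
      simp only [insertAt, if_neg (show ¬k + 1 < j by omega), if_neg (show ¬k + 2 < j by omega),
        if_neg (show k + 1 ≠ j by omega), if_neg (show k + 2 ≠ j by omega),
        Nat.add_sub_cancel, hQ]
      omega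

end Words

def toWord {n : ℕ} (π : Equiv.Perm (Fin n)) : ℕ → ℕ := fun i =>
  if h : i < n then π ⟨i, h⟩ else 0

/-- The permutation whose one-line notation is that of `σ` with the new largest letter `n`
inserted at position `j`. -/
def insertMax {n : ℕ} (σ : Equiv.Perm (Fin n)) (j : Fin (n + 1)) : Equiv.Perm (Fin (n + 1)) :=
  (finSuccEquiv' j).trans ((Equiv.optionCongr σ).trans (finSuccEquiv' (Fin.last n)).symm)

section Insertion

variable {n : ℕ} (σ : Equiv.Perm (Fin n)) (j : Fin (n + 1))

@[simp]
lemma toWord_apply_val (π : Equiv.Perm (Fin n)) (i : Fin n) : toWord π i = π i :=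
  dif_pos i.isLt

@[simp]
lemma insertMax_apply_self : insertMax σ j j = Fin.last n := by
  simp [insertMax]

@[simp]
lemma insertMax_apply_succAbove (a : Fin n) :
    insertMax σ j (j.succAbove a) = (σ a).castSucc := by
  simp [insertMax, Fin.succAbove_last]

lemma insertMax_symm_last : (insertMax σ j).symm (Fin.last n) = j := by
  rw [Equiv.symm_apply_eq, insertMax_apply_self]

lemma insertMax_bijective :
    Function.Bijective fun p : Equiv.Perm (Fin n) × Fin (n + 1) => insertMax p.1 p.2 := by
  refine (Fintype.bijective_iff_injective_and_card _).mpr ⟨?_, ?_⟩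
  · rintro ⟨σ, j⟩ ⟨σ', j'⟩ h
    obtain rfl : j = j' := by
      simpa only [insertMax_symm_last] using congr_arg (fun π => π.symm (Fin.last n)) h
    have hσ : σ = σ' := Equiv.ext fun a => Fin.castSucc_injective _ <| by
      simpa only [insertMax_apply_succAbove] using congr_arg (fun π => π (j.succAbove a)) h
    rw [hσ]
  · simp [Fintype.card_perm, Nat.factorial_succ, mul_comm]

lemma toWord_insertMax (i : Fin (n + 1)) :
    toWord (insertMax σ j) i = insertAt (toWord σ) j n i := by
  rcases Fin.eq_self_or_eq_succAbove j i with rfl | ⟨a, rfl⟩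
  · simp [insertAt]
  · rw [toWord_apply_val, insertMax_apply_succAbove, Fin.val_castSucc]
    unfold Fin.succAbove insertAt
    split_ifs <;> simp_all [Fin.lt_def]
    all_goals omega

end Insertion

lemma des_eq_wordDescents {m : ℕ} (π : Equiv.Perm (Fin (m + 1))) :
    des π = wordDescents (toWord π) m := by
  rw [des, card_filter, Fin.sum_univ_castSucc, wordDescents, ← Fin.sum_univ_eq_sum_range]
  simp only [Fin.val_last, lt_self_iff_false, false_and, if_false, add_zero]
  refine Fintype.sum_congr _ _ fun i => if_congr ?_ rfl rfl
  have hrot : finRotate (m + 1) i.castSucc = i.succ := by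
    ext; rw [coe_finRotate_of_ne_last (Fin.castSucc_lt_last i).ne]; rfl
  have h₀ : toWord π i = π i.castSucc := toWord_apply_val π i.castSucc
  have h₁ : toWord π (i + 1) = π i.succ := toWord_apply_val π i.succ
  rw [hrot, h₀, h₁]
  exact ⟨And.right, fun h => ⟨Nat.succ_lt_succ i.isLt, h⟩⟩

lemma des_insertMax {m : ℕ} (σ : Equiv.Perm (Fin (m + 1))) (j : Fin (m + 2)) :
    des (insertMax σ j) = des σ + if (j : ℕ) ∈ quietSlots (toWord σ) m then 0 else 1 := by
  rw [des_eq_wordDescents, des_eq_wordDescents, ← wordDescents_insertAt (by omega)]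
  · exact wordDescents_congr fun i hi => toWord_insertMax σ j ⟨i, by omega⟩
  · intro i hi
    rw [toWord, dif_pos (by omega)]
    exact (σ _).isLt

section EulerOperator

variable {R : Type*} [CommRing R]

noncomputable def eulerianOp (k : ℕ) : R[X] →ₗ[R] R[X] :=
  LinearMap.mulLeft R (X - X ^ 2) ∘ₗ derivative + LinearMap.mulLeft R ((k : R[X]) * X)

lemma eulerianOp_apply (k : ℕ) (p : R[X]) :
    eulerianOp k p = (X - X ^ 2) * derivative p + (k : R[X]) * X * p :=
  rfl

lemma eulerianOp_X_pow_mul_one_add_X_pow (i m : ℕ) :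
    eulerianOp (2 * i + m) (X ^ i * (1 + X) ^ m : R[X]) =
      i • (X ^ i * (1 + X) ^ (m + 1)) + (2 * m) • (X ^ (i + 1) * (1 + X) ^ (m - 1)) := by
  rw [eulerianOp_apply, derivative_mul, derivative_X_pow, derivative_pow, derivative_add,
    derivative_one, derivative_X]
  rcases i with _ | i <;> rcases m with _ | m <;> simp only [nsmul_eq_mul, C_eq_natCast] <;>
    push_cast <;> ring

end EulerOperator

lemma sum_X_pow_des_insertMax {m : ℕ} (σ : Equiv.Perm (Fin (m + 1))) :
    ∑ j, (X : ℤ[X]) ^ (des (insertMax σ j) + 1) = eulerianOp (m + 2) (X ^ (des σ + 1)) := by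
  set Q := quietSlots (toWord σ) m
  have hQ : Q ⊆ range (m + 2) := filter_subset _ _
  have hterm : ∀ j : ℕ, (X : ℤ[X]) ^ (des σ + (if j ∈ Q then 0 else 1) + 1) =
      X ^ (des σ + 2) - if j ∈ Q then X ^ (des σ + 2) - X ^ (des σ + 1) else 0 := fun j => by
    split_ifs <;> ring
  simp_rw [des_insertMax]
  rw [Fin.sum_univ_eq_sum_range (fun j => (X : ℤ[X]) ^ (des σ + (if j ∈ Q then 0 else 1) + 1)),
    sum_congr rfl fun j _ => hterm j, sum_sub_distrib, sum_ite_mem, inter_eq_right.mpr hQ,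
    sum_const, sum_const, card_range, card_quietSlots, ← des_eq_wordDescents, eulerianOp_apply,
    derivative_X_pow]
  simp only [nsmul_eq_mul, C_eq_natCast]
  push_cast
  ring

lemma eulerianPoly_succ (m : ℕ) :
    eulerianPoly (m + 2) = eulerianOp (m + 2) (eulerianPoly (m + 1)) := by
  rw [eulerianPoly, eulerianPoly, map_sum,
    ← Fintype.sum_bijective _ insertMax_bijective _ _ fun _ => rfl, Fintype.sum_prod_type]
  exact sum_congr rfl fun σ _ => sum_X_pow_des_insertMax σ

section GammaCone

variable {R : Type*} [CommRing R]

variable (R) in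
noncomputable def gammaCone (n : ℕ) : AddSubmonoid R[X] :=
  AddSubmonoid.closure ((fun i => X ^ i * (1 + X) ^ (n + 1 - 2 * i)) '' ↑(Icc 1 ((n + 1) / 2)))

lemma X_pow_mul_one_add_X_pow_mem_gammaCone {n i : ℕ} (hi : 1 ≤ i) (hin : 2 * i ≤ n + 1) :
    X ^ i * (1 + X) ^ (n + 1 - 2 * i) ∈ gammaCone R n :=
  AddSubmonoid.subset_closure ⟨i, by simp only [coe_Icc, Set.mem_Icc]; omega, rfl⟩

lemma eulerianOp_mem_gammaCone {n : ℕ} {p : R[X]} (hp : p ∈ gammaCone R n) :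
    eulerianOp (n + 1) p ∈ gammaCone R (n + 1) := by
  refine AddSubmonoid.closure_induction (fun q hq => ?_) (by simp)
    (fun _ _ _ _ => by simpa using add_mem) hp
  obtain ⟨i, hi, rfl⟩ := hq
  simp only [coe_Icc, Set.mem_Icc] at hi
  have h := eulerianOp_X_pow_mul_one_add_X_pow (R := R) i (n + 1 - 2 * i)
  rw [show 2 * i + (n + 1 - 2 * i) = n + 1 by omega] at h
  rw [h]
  refine add_mem (nsmul_mem ?_ _) ?_
  · convert X_pow_mul_one_add_X_pow_mem_gammaCone (R := R) (n := n + 1) hi.1 (by omega) using 3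
    omega
  rcases (n + 1 - 2 * i).eq_zero_or_pos with h0 | hpos
  · simp [h0]
  refine nsmul_mem ?_ _
  convert X_pow_mul_one_add_X_pow_mem_gammaCone (R := R) (n := n + 1) (i := i + 1)
    (by omega) (by omega) using 3
  omega

end GammaCone

lemma eulerianPoly_mem_gammaCone {n : ℕ} (hn : 1 ≤ n) : eulerianPoly n ∈ gammaCone ℤ n := by
  induction n, hn using Nat.le_induction with
  | base =>
    have h : eulerianPoly 1 = X := by simp [eulerianPoly, des]
    simpa [h] using X_pow_mul_one_add_X_pow_mem_gammaCone (R := ℤ) (n := 1) le_rfl le_rfl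
  | succ n hn ih =>
    obtain ⟨m, rfl⟩ := Nat.exists_eq_add_of_le' hn
    rw [eulerianPoly_succ]
    exact eulerianOp_mem_gammaCone ih

/-- γ-nonnegativity of the Eulerian polynomials (Foata–Schützenberger).
Here `⌈n/2⌉ = (n+1)/2` in natural-number arithmetic. -/
theorem stmt_2 :
    ∀ n : ℕ, 1 ≤ n → ∃ γ : ℕ → ℕ,
      eulerianPoly n =
        ∑ i ∈ Finset.Icc 1 ((n + 1) / 2),
          (γ i : Polynomial ℤ) * Polynomial.X ^ i * (1 + Polynomial.X) ^ (n + 1 - 2 * i) := by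
  intro n hn
  obtain ⟨γ, hγ⟩ :=
    AddSubmonoid.exists_eq_sum_nsmul_of_mem_closure_image (eulerianPoly_mem_gammaCone hn)
  exact ⟨γ, by simp only [hγ, nsmul_eq_mul, mul_assoc]⟩
end

section
/- Let B^{(n)}_{i,j} = (stxy)^i(st+xy)^j(tx+sy)^{n+1-2i-j} with n+1-2i-j ≥ 0. Then stxy·(∂²/∂s∂t + ∂²/∂x∂y)B^{(n)}_{i,j} = i(n+1-i-j)·B^{(n+1)}_{i,j+1} + j(2n+3-j)·B^{(n+1)}_{i+1,j-1} + (n+1-2i-j)(n-2i-j)·B^{(n+1)}_{i+1,j+1}. -/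
/-!
With `L = ∂²/∂s∂t + ∂²/∂x∂y`, one has `L (f g) = L f · g + f · L g + Γ(f, g)` for a symmetric
biderivation `Γ`, so `L` of a monomial in `u = stxy`, `v = st + xy`, `w = tx + sy` is determined by
`L u = v`, `L v = 2`, `L w = 0` and the values of `Γ` on `u, v, w`, which are again polynomials in
`u, v, w`: `Γ(u,u) = 2uv`, `Γ(u,v) = 4u`, `Γ(u,w) = vw`, `Γ(v,v) = Γ(w,w) = 2v`, `Γ(v,w) = 2w`.
Every term of `L (u^i v^j w^k)` carries at worst one factor `u⁻¹`, which the extra `u` clears.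
-/

open MvPolynomial

/-- The basis element `B^(n)_{i,j} = (stxy)^i (st+xy)^j (tx+sy)^(n+1-2i-j)`,
with `s = X 0`, `t = X 1`, `x = X 2`, `y = X 3`. -/
noncomputable def Bbasis (n i j : ℕ) : MvPolynomial (Fin 4) ℤ :=
  (X 0 * X 1 * X 2 * X 3) ^ i * (X 0 * X 1 + X 2 * X 3) ^ j *
    (X 1 * X 2 + X 0 * X 3) ^ (n + 1 - 2 * i - j)

section NatCastPow

variable {R : Type*} [Ring R]

theorem natCast_mul_pow_pred_mul_self (a : R) (n : ℕ) : (n : R) * a ^ (n - 1) * a = n * a ^ n := by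
  cases n <;> simp [pow_succ, mul_assoc]

theorem natCast_mul_sub_one_mul_pow_sub_two_mul_sq (a : R) (n : ℕ) :
    (n : R) * (n - 1) * a ^ (n - 2) * a ^ 2 = n * (n - 1) * a ^ n := by
  rcases n with _ | _ | n <;> simp [pow_add, sq, mul_assoc]

end NatCastPow

section MixedLaplacian

variable {R : Type*} [CommRing R]

noncomputable def mixedLaplacian (f : MvPolynomial (Fin 4) R) : MvPolynomial (Fin 4) R :=
  pderiv 0 (pderiv 1 f) + pderiv 2 (pderiv 3 f)

noncomputable def mixedSymbol (f : MvPolynomial (Fin 4) R) : MvPolynomial (Fin 4) R :=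
  pderiv 0 f * pderiv 1 f + pderiv 2 f * pderiv 3 f

noncomputable def mixedPairing (f g : MvPolynomial (Fin 4) R) : MvPolynomial (Fin 4) R :=
  pderiv 0 f * pderiv 1 g + pderiv 1 f * pderiv 0 g +
    pderiv 2 f * pderiv 3 g + pderiv 3 f * pderiv 2 g

variable (f g h : MvPolynomial (Fin 4) R)

theorem mixedPairing_comm : mixedPairing f g = mixedPairing g f := by
  unfold mixedPairing; ring

theorem mixedPairing_self : mixedPairing f f = 2 * mixedSymbol f := by
  unfold mixedPairing mixedSymbol; ring

theorem mixedPairing_mul_left :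
    mixedPairing (f * g) h = f * mixedPairing g h + g * mixedPairing f h := by
  simp only [mixedPairing, Derivation.leibniz, smul_eq_mul]; ring

theorem mixedLaplacian_mul :
    mixedLaplacian (f * g) = mixedLaplacian f * g + f * mixedLaplacian g + mixedPairing f g := by
  simp only [mixedLaplacian, mixedPairing, Derivation.leibniz, map_add, smul_eq_mul]; ring

theorem mul_mixedPairing_pow_left (n : ℕ) :
    f * mixedPairing (f ^ n) g = n * f ^ n * mixedPairing f g := by
  induction n with
  | zero => simp [mixedPairing]
  | succ n ih =>
    rw [pow_succ, mixedPairing_mul_left]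
    push_cast
    linear_combination f * ih

theorem mul_mul_mixedPairing_pow_pow (m n : ℕ) :
    f * g * mixedPairing (f ^ m) (g ^ n) = m * n * f ^ m * g ^ n * mixedPairing f g := by
  have hf := mul_mixedPairing_pow_left f (g ^ n) m
  have hg := mul_mixedPairing_pow_left g f n
  rw [mixedPairing_comm (g ^ n), mixedPairing_comm g] at hg
  linear_combination g * hf + m * f ^ m * hg

theorem sq_mul_mixedLaplacian_pow (n : ℕ) :
    f ^ 2 * mixedLaplacian (f ^ n) =
      n * f ^ (n + 1) * mixedLaplacian f + n * (n - 1) * f ^ n * mixedSymbol f := by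
  induction n with
  | zero => simp [mixedLaplacian]
  | succ n ih =>
    have hpair := mul_mixedPairing_pow_left f f n
    rw [mixedPairing_self] at hpair
    rw [pow_succ f n, mixedLaplacian_mul]
    push_cast
    linear_combination f * ih + f * hpair

end MixedLaplacian

namespace Bbasis

variable {R : Type*} [CommRing R]

noncomputable def u : MvPolynomial (Fin 4) R := X 0 * X 1 * X 2 * X 3
noncomputable def v : MvPolynomial (Fin 4) R := X 0 * X 1 + X 2 * X 3
noncomputable def w : MvPolynomial (Fin 4) R := X 1 * X 2 + X 0 * X 3

theorem mixedLaplacian_u : mixedLaplacian (u : MvPolynomial (Fin 4) R) = v := by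
  simp [mixedLaplacian, u, v, Derivation.leibniz]; ring

theorem mixedLaplacian_v : mixedLaplacian (v : MvPolynomial (Fin 4) R) = 2 := by
  simp [mixedLaplacian, v, Derivation.leibniz]; ring

theorem mixedLaplacian_w : mixedLaplacian (w : MvPolynomial (Fin 4) R) = 0 := by
  simp [mixedLaplacian, w, Derivation.leibniz]

theorem mixedSymbol_u : mixedSymbol (u : MvPolynomial (Fin 4) R) = u * v := by
  simp [mixedSymbol, u, v, Derivation.leibniz]; ring

theorem mixedSymbol_v : mixedSymbol (v : MvPolynomial (Fin 4) R) = v := by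
  simp [mixedSymbol, v, Derivation.leibniz]; ring

theorem mixedSymbol_w : mixedSymbol (w : MvPolynomial (Fin 4) R) = v := by
  simp [mixedSymbol, v, w, Derivation.leibniz]; ring

theorem mixedPairing_u_v : mixedPairing (u : MvPolynomial (Fin 4) R) v = 4 * u := by
  simp [mixedPairing, u, v, Derivation.leibniz]; ring

theorem mixedPairing_u_w : mixedPairing (u : MvPolynomial (Fin 4) R) w = v * w := by
  simp [mixedPairing, u, v, w, Derivation.leibniz]; ring

theorem mixedPairing_v_w : mixedPairing (v : MvPolynomial (Fin 4) R) w = 2 * w := by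
  simp [mixedPairing, v, w, Derivation.leibniz]; ring

variable [IsDomain R]

theorem u_ne_zero : (u : MvPolynomial (Fin 4) R) ≠ 0 := by
  simp [u, X_ne_zero]

theorem v_ne_zero : (v : MvPolynomial (Fin 4) R) ≠ 0 := fun h => by
  simpa [v] using congrArg (eval ![1, 1, 0, 0]) h

theorem w_ne_zero : (w : MvPolynomial (Fin 4) R) ≠ 0 := fun h => by
  simpa [w] using congrArg (eval ![0, 1, 1, 0]) h

theorem u_mul_mixedLaplacian_u_pow_mul_v_pow_mul_w_pow (i j k : ℕ) :
    u * mixedLaplacian ((u : MvPolynomial (Fin 4) R) ^ i * v ^ j * w ^ k) =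
      (i * (i + k) : MvPolynomial (Fin 4) R) * (u ^ i * v ^ (j + 1) * w ^ k) +
        (j * (4 * i + j + 2 * k + 1) : MvPolynomial (Fin 4) R) * (u ^ (i + 1) * v ^ (j - 1) * w ^ k) +
        (k * (k - 1) : MvPolynomial (Fin 4) R) * (u ^ (i + 1) * v ^ (j + 1) * w ^ (k - 2)) := by
  have expand : mixedLaplacian ((u : MvPolynomial (Fin 4) R) ^ i * v ^ j * w ^ k) =
      mixedLaplacian (u ^ i) * v ^ j * w ^ k + u ^ i * mixedLaplacian (v ^ j) * w ^ k +
        u ^ i * v ^ j * mixedLaplacian (w ^ k) + w ^ k * mixedPairing (u ^ i) (v ^ j) +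
        v ^ j * mixedPairing (u ^ i) (w ^ k) + u ^ i * mixedPairing (v ^ j) (w ^ k) := by
    simp only [mixedLaplacian_mul, mixedPairing_mul_left]
    ring
  have hu := sq_mul_mixedLaplacian_pow (u : MvPolynomial (Fin 4) R) i
  have hv := sq_mul_mixedLaplacian_pow (v : MvPolynomial (Fin 4) R) j
  have hw := sq_mul_mixedLaplacian_pow (w : MvPolynomial (Fin 4) R) k
  have huv := mul_mul_mixedPairing_pow_pow (u : MvPolynomial (Fin 4) R) v i j
  have huw := mul_mul_mixedPairing_pow_pow (u : MvPolynomial (Fin 4) R) w i k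
  have hvw := mul_mul_mixedPairing_pow_pow (v : MvPolynomial (Fin 4) R) w j k
  rw [mixedLaplacian_u, mixedSymbol_u] at hu
  rw [mixedLaplacian_v, mixedSymbol_v] at hv
  rw [mixedLaplacian_w, mixedSymbol_w] at hw
  rw [mixedPairing_u_v] at huv
  rw [mixedPairing_u_w] at huw
  rw [mixedPairing_v_w] at hvw
  have hv' := natCast_mul_pow_pred_mul_self (v : MvPolynomial (Fin 4) R) j
  have hw' := natCast_mul_sub_one_mul_pow_sub_two_mul_sq (w : MvPolynomial (Fin 4) R) k
  -- Cancelling `(u v w) ^ 2` afterwards lets every power lemma be used in its subtraction-free form.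
  refine mul_left_cancel₀ (pow_ne_zero 2 (mul_ne_zero (mul_ne_zero u_ne_zero v_ne_zero) w_ne_zero)) ?_
  rw [expand]
  linear_combination u * v ^ (j + 2) * w ^ (k + 2) * hu + u ^ (i + 3) * w ^ (k + 2) * hv +
    u ^ (i + 3) * v ^ (j + 2) * hw + u ^ 2 * v * w ^ (k + 2) * huv +
    u ^ 2 * v ^ (j + 2) * w * huw + u ^ (i + 3) * v * w * hvw -
    (4 * i + j + 2 * k + 1) * u ^ (i + 3) * v * w ^ (k + 2) * hv' - u ^ (i + 3) * v ^ (j + 3) * hw'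

end Bbasis

open Bbasis

theorem stmt_11 (n i j : ℕ) (h : 2 * i + j ≤ n + 1) :
    X 0 * X 1 * X 2 * X 3 *
        (pderiv 0 (pderiv 1 (Bbasis n i j)) + pderiv 2 (pderiv 3 (Bbasis n i j))) =
      C ((i : ℤ) * ((n : ℤ) + 1 - i - j)) * Bbasis (n + 1) i (j + 1) +
        C ((j : ℤ) * (2 * (n : ℤ) + 3 - j)) * Bbasis (n + 1) (i + 1) (j - 1) +
        C (((n : ℤ) + 1 - 2 * i - j) * ((n : ℤ) - 2 * i - j)) *
          Bbasis (n + 1) (i + 1) (j + 1) := by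
  obtain ⟨k, hk⟩ : ∃ k, n + 1 = 2 * i + j + k := ⟨n + 1 - 2 * i - j, by omega⟩
  have hB : Bbasis n i j = u ^ i * v ^ j * w ^ k := by
    rw [Bbasis, show n + 1 - 2 * i - j = k by omega]; rfl
  have hB₁ : Bbasis (n + 1) i (j + 1) = u ^ i * v ^ (j + 1) * w ^ k := by
    rw [Bbasis, show n + 1 + 1 - 2 * i - (j + 1) = k by omega]; rfl
  have hB₂ : (j : MvPolynomial (Fin 4) ℤ) * Bbasis (n + 1) (i + 1) (j - 1) =
      (j : MvPolynomial (Fin 4) ℤ) * (u ^ (i + 1) * v ^ (j - 1) * w ^ k) := by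
    rcases j with _ | j
    · simp
    · rw [Bbasis, show n + 1 + 1 - 2 * (i + 1) - (j + 1 - 1) = k by omega]; rfl
  have hB₃ : Bbasis (n + 1) (i + 1) (j + 1) =
      u ^ (i + 1) * v ^ (j + 1) * w ^ (k - 2) := by
    rw [Bbasis, show n + 1 + 1 - 2 * (i + 1) - (j + 1) = k - 2 by omega]; rfl
  have hn : (n : MvPolynomial (Fin 4) ℤ) = 2 * i + j + k - 1 := by
    rw [eq_sub_iff_add_eq]; exact_mod_cast hk
  change u * mixedLaplacian (Bbasis n i j) = _
  rw [hB, u_mul_mixedLaplacian_u_pow_mul_v_pow_mul_w_pow, hB₁, hB₃]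
  simp only [map_mul, map_sub, map_add, map_natCast, map_ofNat, map_one, hn]
  linear_combination (-(4 * i + j + 2 * k + 1) : MvPolynomial (Fin 4) ℤ) * hB₂
end

section
/- Let B^{(n)}_{i,j} = (stxy)^i(st+xy)^j(tx+sy)^{n+1-2i-j} with n+1-2i-j ≥ 0. Then stxy·(∂²/∂s∂y + ∂²/∂t∂x)B^{(n)}_{i,j} = i(i+j)·B^{(n+1)}_{i,j} + j(j-1)·B^{(n+1)}_{i+1,j-2} + (n+1-2i-j)(n+2+2i+j)·B^{(n+1)}_{i+1,j}. -/
open MvPolynomial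

set_option maxHeartbeats 1000000

lemma core_id (i j k : ℕ) :
    (X 0 * X 1 * X 2 * X 3 : MvPolynomial (Fin 4) ℤ) *
      (pderiv 0 (pderiv 3 ((X 0*X 1*X 2*X 3)^i * (X 0*X 1 + X 2*X 3)^j * (X 1*X 2 + X 0*X 3)^k))
       + pderiv 1 (pderiv 2 ((X 0*X 1*X 2*X 3)^i * (X 0*X 1 + X 2*X 3)^j * (X 1*X 2 + X 0*X 3)^k))) =
    C ((i:ℤ)*((i:ℤ)+(j:ℤ))) * ((X 0*X 1*X 2*X 3)^i * (X 0*X 1 + X 2*X 3)^j * (X 1*X 2 + X 0*X 3)^(k+1))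
    + C ((j:ℤ)*((j:ℤ)-1)) * ((X 0*X 1*X 2*X 3)^(i+1) * (X 0*X 1 + X 2*X 3)^(j-2) * (X 1*X 2 + X 0*X 3)^(k+1))
    + C ((k:ℤ)*((k:ℤ)+1+4*(i:ℤ)+2*(j:ℤ))) * ((X 0*X 1*X 2*X 3)^(i+1) * (X 0*X 1 + X 2*X 3)^j * (X 1*X 2 + X 0*X 3)^(k-1)) := by
  rcases i with _|_|i <;> rcases j with _|_|j <;> rcases k with _|_|k <;>
  · simp only [pderiv_mul, pderiv_pow, pderiv_X, Pi.single_apply, Derivation.map_natCast,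
      Nat.add_sub_cancel, eq_intCast, map_add, map_zero, Derivation.map_zero,
      Derivation.map_one_eq_zero, Nat.succ_eq_add_one, Nat.zero_sub, Nat.sub_self,
      Nat.succ_sub_one, pow_zero, pow_one,
      mul_zero, zero_mul, mul_one, one_mul, add_zero, zero_add, reduceIte, Fin.reduceEq]
    push_cast
    ring

theorem stmt_12 (n i j : ℕ) (h : 2 * i + j ≤ n + 1) :
    X 0 * X 1 * X 2 * X 3 *
        (pderiv 0 (pderiv 3 (Bbasis n i j)) + pderiv 1 (pderiv 2 (Bbasis n i j))) =
      C ((i : ℤ) * ((i : ℤ) + j)) * Bbasis (n + 1) i j +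
        C ((j : ℤ) * ((j : ℤ) - 1)) * Bbasis (n + 1) (i + 1) (j - 2) +
        C (((n : ℤ) + 1 - 2 * i - j) * ((n : ℤ) + 2 + 2 * i + j)) *
          Bbasis (n + 1) (i + 1) j := by
  rcases j with _|_|j
  · obtain ⟨k, hk⟩ : ∃ k, n + 1 = 2 * i + 0 + k := ⟨n + 1 - 2 * i - 0, by omega⟩
    have hn : (n:ℤ) = 2 * (i:ℤ) + (k:ℤ) - 1 := by omega
    have hz : ((n:ℤ) + 1 - 2 * i - ((0:ℕ):ℤ)) * ((n:ℤ) + 2 + 2 * i + ((0:ℕ):ℤ))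
        = (k:ℤ) * ((k:ℤ) + 1 + 4 * (i:ℤ) + 2 * ((0:ℕ):ℤ)) := by rw [hn]; push_cast; ring
    have e0 : n + 1 - 2 * i - 0 = k := by omega
    have e1 : n + 1 + 1 - 2 * i - 0 = k + 1 := by omega
    have e2 : n + 1 + 1 - 2 * (i + 1) - (0 - 2) = k - 1 := by omega
    have e3 : n + 1 + 1 - 2 * (i + 1) - 0 = k - 1 := by omega
    simp only [Bbasis, e0, e1, e2, e3]
    rw [core_id i 0 k, hz]
    norm_num
  · obtain ⟨k, hk⟩ : ∃ k, n + 1 = 2 * i + 1 + k := ⟨n + 1 - 2 * i - 1, by omega⟩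
    have hn : (n:ℤ) = 2 * (i:ℤ) + (k:ℤ) := by omega
    have hz : ((n:ℤ) + 1 - 2 * i - ((1:ℕ):ℤ)) * ((n:ℤ) + 2 + 2 * i + ((1:ℕ):ℤ))
        = (k:ℤ) * ((k:ℤ) + 1 + 4 * (i:ℤ) + 2 * ((1:ℕ):ℤ)) := by rw [hn]; push_cast; ring
    have e0 : n + 1 - 2 * i - 1 = k := by omega
    have e1 : n + 1 + 1 - 2 * i - 1 = k + 1 := by omega
    have e2 : n + 1 + 1 - 2 * (i + 1) - (1 - 2) = k := by omega
    have e3 : n + 1 + 1 - 2 * (i + 1) - 1 = k - 1 := by omega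
    simp only [Bbasis, e0, e1, e2, e3]
    rw [core_id i 1 k, hz]
    norm_num
  · obtain ⟨k, hk⟩ : ∃ k, n + 1 = 2 * i + (j + 1 + 1) + k := ⟨n + 1 - 2 * i - (j + 1 + 1), by omega⟩
    have hn : (n:ℤ) = 2 * (i:ℤ) + (j:ℤ) + (k:ℤ) + 1 := by omega
    have hz : ((n:ℤ) + 1 - 2 * i - ((j+1+1:ℕ):ℤ)) * ((n:ℤ) + 2 + 2 * i + ((j+1+1:ℕ):ℤ))
        = (k:ℤ) * ((k:ℤ) + 1 + 4 * (i:ℤ) + 2 * ((j+1+1:ℕ):ℤ)) := by rw [hn]; push_cast; ring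
    have e0 : n + 1 - 2 * i - (j + 1 + 1) = k := by omega
    have e1 : n + 1 + 1 - 2 * i - (j + 1 + 1) = k + 1 := by omega
    have e2 : n + 1 + 1 - 2 * (i + 1) - (j + 1 + 1 - 2) = k + 1 := by omega
    have e3 : n + 1 + 1 - 2 * (i + 1) - (j + 1 + 1) = k - 1 := by omega
    simp only [Bbasis, e0, e1, e2, e3]
    rw [core_id i (j + 1 + 1) k, hz]
end

section
/- For n ≥ 1: (n+1)·A_n(s,t) = Σ_{π ∈ S_{n+1}} s^{cdes(π^{-1})} t^{cdes(π)}. -/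
/-!
Every `σ ∈ S_{n+1}` factors uniquely as `i ↦ π'(i) + k` with `k ∈ ℤ/(n+1)` and `π'` fixing the
last point, i.e. `σ = finCycle k * extendLast π` with `π ∈ S_n`. The cyclic descent number is
invariant under adding a constant to all values (a comparison flips exactly when one side wraps
around, and every value wraps equally often along the cycle) and under rotating positions.
Since `σ⁻¹ = extendLast π⁻¹ * finCycle (-k)`, both `cdes σ` and `cdes σ⁻¹` are those of
`extendLast π` and its inverse, and for `n ≥ 1` these are `des π + 1` and `des π⁻¹ + 1`: the extra
cyclic descent is the step from the fixed maximum back to position `0`. Each `π` thus accounts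
for `n + 1` permutations `σ`.
-/

open MvPolynomial

/-- Number of cyclic descents of a permutation of `Fin n`. -/
def cdes {n : ℕ} (π : Equiv.Perm (Fin n)) : ℕ :=
  (Finset.univ.filter fun i : Fin n => π (finRotate n i) < π i).card

/-- The two-sided Eulerian polynomial `A_n(s,t)`, with `s = X 0`, `t = X 1`. -/
noncomputable def twoSidedEulerian (n : ℕ) : MvPolynomial (Fin 2) ℤ :=
  ∑ π : Equiv.Perm (Fin n), X 0 ^ (des π⁻¹ + 1) * X 1 ^ (des π + 1)


open Equiv

lemma cdes_mul_of_commute {n : ℕ} (σ τ : Perm (Fin n)) (h : Commute τ (finRotate n)) :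
    cdes (σ * τ) = cdes σ := by
  have hτ (i : Fin n) : τ (finRotate n i) = finRotate n (τ i) := DFunLike.congr_fun h.eq i
  simp only [cdes, Finset.card_filter, Perm.mul_apply, hτ,
    ← Equiv.sum_comp τ fun i => if σ (finRotate n i) < σ i then 1 else 0]

lemma commute_finCycle_finRotate {n : ℕ} (k : Fin n) : Commute (finCycle k) (finRotate n) := by
  ext i
  have := i.neZero
  simp [add_right_comm]

/-- Adding `k` to both sides of `a < b` in `Fin n` reverses the comparison exactly when one of
them wraps around and the other does not. -/
lemma Fin.ite_add_lt_add_add_ite {n : ℕ} (a b k : Fin n) :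
    ((if a + k < b + k then 1 else 0) + (if n ≤ (b : ℕ) + k then 1 else 0) : ℕ) =
      (if a < b then 1 else 0) + (if n ≤ (a : ℕ) + k then 1 else 0) := by
  simp only [Fin.lt_def, Fin.val_add_eq_ite]
  split_ifs <;> omega

lemma cdes_finCycle_mul {n : ℕ} (k : Fin n) (σ : Perm (Fin n)) :
    cdes (finCycle k * σ) = cdes σ := by
  have key := Finset.sum_congr rfl fun i (_ : i ∈ Finset.univ) =>
    Fin.ite_add_lt_add_add_ite (σ (finRotate n i)) (σ i) k
  have wraps : (∑ i, if n ≤ (σ i : ℕ) + k then 1 else 0) =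
      ∑ i, if n ≤ (σ (finRotate n i) : ℕ) + k then 1 else 0 :=
    (Equiv.sum_comp (finRotate n) fun i => if n ≤ (σ i : ℕ) + k then 1 else 0).symm
  simp only [Finset.sum_add_distrib, wraps, add_left_inj] at key
  simp only [cdes, Finset.card_filter, Perm.mul_apply, finCycle_apply]
  exact key

def extendLast {n : ℕ} (π : Perm (Fin n)) : Perm (Fin (n + 1)) where
  toFun := Fin.lastCases (Fin.last n) fun j => (π j).castSucc
  invFun := Fin.lastCases (Fin.last n) fun j => (π⁻¹ j).castSucc
  left_inv i := by cases i using Fin.lastCases <;> simp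
  right_inv i := by cases i using Fin.lastCases <;> simp

section extendLast

variable {n : ℕ} (π : Perm (Fin n))

@[simp]
lemma extendLast_castSucc (j : Fin n) : extendLast π j.castSucc = (π j).castSucc := by
  simp [extendLast]

@[simp]
lemma extendLast_last : extendLast π (Fin.last n) = Fin.last n := by
  simp [extendLast]

lemma extendLast_inv : extendLast π⁻¹ = (extendLast π)⁻¹ := rfl

lemma extendLast_injective : Function.Injective (extendLast (n := n)) := fun _ _ h =>
  Equiv.ext fun j => Fin.castSucc_injective _ (by simpa using DFunLike.congr_fun h j.castSucc)

lemma extendLast_descent_iff (j : Fin n) :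
    extendLast π (finRotate (n + 1) j.castSucc) < extendLast π j.castSucc ↔
      (j : ℕ) + 1 < n ∧ π (finRotate n j) < π j := by
  by_cases hj : (j : ℕ) + 1 < n
  · have : finRotate (n + 1) j.castSucc = (finRotate n j).castSucc :=
      Fin.ext (by simp [Fin.val_add, Nat.mod_eq_of_lt hj])
    simp [this, hj]
  · have : finRotate (n + 1) j.castSucc = Fin.last n :=
      Fin.ext (by simp; omega)
    simp [this, hj, (Fin.castSucc_lt_last _).le]

lemma cdes_extendLast (hn : 0 < n) : cdes (extendLast π) = des π + 1 := by
  have wrap : extendLast π (finRotate (n + 1) (Fin.last n)) < extendLast π (Fin.last n) := by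
    have : (0 : Fin (n + 1)) = Fin.castSucc ⟨0, hn⟩ := rfl
    rw [finRotate_last, this, extendLast_castSucc, extendLast_last]
    exact Fin.castSucc_lt_last _
  simp only [cdes, des, Finset.card_filter, Fin.sum_univ_castSucc, extendLast_descent_iff,
    if_pos wrap]

end extendLast

lemma bijective_finCycle_mul_extendLast (n : ℕ) :
    Function.Bijective fun p : Fin (n + 1) × Perm (Fin n) => finCycle p.1 * extendLast p.2 := by
  refine (Fintype.bijective_iff_injective_and_card _).2 ⟨?_, ?_⟩
  · rintro ⟨k, π⟩ ⟨k', π'⟩ h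
    have hk : k = k' := by
      simpa using DFunLike.congr_fun h (Fin.last n)
    subst hk
    exact congrArg (Prod.mk k) (extendLast_injective (mul_left_cancel h))
  · simp [Fintype.card_perm, Nat.factorial_succ]

/-- `(n+1)·A_n(s,t) = Σ_{π ∈ S_{n+1}} s^(cdes π⁻¹) t^(cdes π)`. -/
theorem stmt_17 (n : ℕ) (hn : 1 ≤ n) :
    ((n : MvPolynomial (Fin 2) ℤ) + 1) * twoSidedEulerian n =
      ∑ π : Equiv.Perm (Fin (n + 1)), X 0 ^ cdes π⁻¹ * X 1 ^ cdes π := by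
  calc ((n : MvPolynomial (Fin 2) ℤ) + 1) * twoSidedEulerian n
      = ∑ p : Fin (n + 1) × Perm (Fin n), X 0 ^ (des p.2⁻¹ + 1) * X 1 ^ (des p.2 + 1) := by
        simp [Fintype.sum_prod_type, twoSidedEulerian, nsmul_eq_mul]
    _ = ∑ π : Perm (Fin (n + 1)), X 0 ^ cdes π⁻¹ * X 1 ^ cdes π := by
        refine Fintype.sum_bijective _ (bijective_finCycle_mul_extendLast n) _ _ fun ⟨k, π⟩ => ?_
        rw [cdes_finCycle_mul, cdes_extendLast π hn, mul_inv_rev,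
          cdes_mul_of_commute _ _ (commute_finCycle_finRotate k).inv_left, ← extendLast_inv,
          cdes_extendLast _ hn]
end

section
/- For every n ≥ 1, A_n(x) = Σ_{e ∈ I_n} x^{dst(e)}, where the sum runs over all inversion sequences of length n; i.e., the statistic dst counting distinct entries of an inversion sequence is Eulerian. -/
/-- An inversion sequence of length `n` is `e = (e_1,…,e_n)` with `0 ≤ e_i ≤ i-1`;
here `e i : Fin (i+1)` for a 0-indexed `i : Fin n`. -/
abbrev InvSeq (n : ℕ) := ∀ i : Fin n, Fin ((i : ℕ) + 1)

/-- The number of distinct entries of an inversion sequence. -/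
def dst {n : ℕ} (e : InvSeq n) : ℕ :=
  (Finset.univ.image fun i : Fin n => ((e i : ℕ))).card

/-!
Let `ascRuns σ` be the number of descents of the word `σ(1) ⋯ σ(n) 0`; it equals `des σ + 1`
for `n ≥ 1`. Both `ascRuns` and `dst` obey the same insertion recurrence. Inserting the new
largest letter into one of the `n + 1` slots of `σ` keeps `ascRuns σ = d` when the slot directly
follows a descent (`d` slots) and raises it by one otherwise (`n + 1 - d` slots). Appending a last
entry `v ≤ n` to `e` keeps `dst e = d` when `v` already occurs in `e` (`d` values) and raises it by
one otherwise. Hence `∑ F ∘ ascRuns` and `∑ F ∘ dst` are transformed by the same operator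
`F ↦ eulerianStep n F` when passing from `n` to `n + 1`, and agree for `n = 0`.
-/

open Finset Equiv

namespace Dumont

variable {M : Type*} [AddCommMonoid M]

lemma sum_fin_ite_val_mem {m : ℕ} {S : Finset ℕ} (hS : S ⊆ range m) (a b : M) :
    ∑ v : Fin m, (if (v : ℕ) ∈ S then a else b) = #S • a + (m - #S) • b := by
  rw [Fin.sum_univ_eq_sum_range (fun v => if v ∈ S then a else b), sum_ite, sum_const, sum_const,
    filter_mem_eq_inter, inter_eq_right.2 hS, filter_notMem_eq_sdiff, card_sdiff_of_subset hS,
    card_range]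

def eulerianStep (n : ℕ) (F : ℕ → M) (d : ℕ) : M := d • F d + (n + 1 - d) • F (d + 1)

section Words

def descentSet (w : ℕ → ℕ) (m : ℕ) : Finset ℕ :=
  (range m).filter fun i => w (i + 1) < w i

lemma card_descentSet_succ (w : ℕ → ℕ) (m : ℕ) :
    #(descentSet w (m + 1)) = #(descentSet w m) + if w (m + 1) < w m then 1 else 0 := by
  rw [descentSet, range_add_one, filter_insert]
  split_ifs
  · rw [card_insert_of_notMem (by simp)]
    rfl
  · rfl

lemma descentSet_congr {w u : ℕ → ℕ} {m : ℕ} (h : ∀ i ≤ m, u i = w i) :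
    descentSet u m = descentSet w m :=
  filter_congr fun i hi => by
    rw [mem_range] at hi
    rw [h i hi.le, h (i + 1) hi]

lemma mem_image_add_one_descentSet_iff {w : ℕ → ℕ} {m p : ℕ} (hp : p ≤ m) :
    p ∈ (descentSet w m).image (· + 1) ↔ 0 < p ∧ w p < w (p - 1) := by
  simp only [descentSet, mem_image, mem_filter, mem_range]
  constructor
  · rintro ⟨i, ⟨-, hi⟩, rfl⟩
    simpa using hi
  · rintro ⟨hp0, hdesc⟩
    exact ⟨p - 1, ⟨by omega, by rwa [Nat.sub_add_cancel hp0]⟩, by omega⟩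

/-- The new maximum `x` at position `p` creates a descent at `p` and destroys the descent
at `p - 1`, if there was one. -/
lemma card_descentSet_insert {w u : ℕ → ℕ} {x p : ℕ} (hx : ∀ i, w i < x)
    (hlt : ∀ i < p, u i = w i) (hp : u p = x) (hgt : ∀ i, p < i → u i = w (i - 1)) (q : ℕ) :
    #(descentSet u (p + q + 1)) = if 0 < p ∧ w p < w (p - 1)
      then #(descentSet w (p + q)) else #(descentSet w (p + q)) + 1 := by
  induction q with
  | zero =>
    have hdesc : u (p + 1) < u p := by
      rw [hp, hgt _ (by omega)]
      exact hx _
    rcases p with _ | k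
    · rw [zero_add, card_descentSet_succ, if_pos hdesc]
      simp [descentSet]
    · have hasc : ¬ u (k + 1) < u k := by
        rw [hp, hlt k (by omega)]
        exact (hx k).not_gt
      rw [card_descentSet_succ, card_descentSet_succ, if_pos hdesc, if_neg hasc,
        card_descentSet_succ, descentSet_congr fun i hi => hlt i (by omega)]
      simp only [Nat.add_sub_cancel]
      split_ifs <;> omega
  | succ q ih =>
    rw [← add_assoc, card_descentSet_succ, ih, card_descentSet_succ,
      hgt _ (by omega), hgt _ (by omega)]
    simp only [Nat.add_sub_cancel, show p + q + 1 + 1 - 1 = p + q + 1 by omega]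
    split_ifs <;> omega

end Words

section Permutations

variable {n : ℕ}

/-- `σ` as a word, shifted by one so that the sentinel `0` past its end lies below every
letter. -/
def word (σ : Perm (Fin n)) (i : ℕ) : ℕ := if h : i < n then σ ⟨i, h⟩ + 1 else 0

lemma word_lt (σ : Perm (Fin n)) (i : ℕ) : word σ i < n + 1 := by
  unfold word
  split_ifs with h
  · exact Nat.succ_lt_succ (σ ⟨i, h⟩).isLt
  · exact n.succ_pos

def ascRuns (σ : Perm (Fin n)) : ℕ := #(descentSet (word σ) n)

lemma des_eq_card_descentSet {m : ℕ} (σ : Perm (Fin (m + 1))) :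
    des σ = #(descentSet (word σ) m) := by
  have word_val : ∀ j : Fin (m + 1), word σ j = σ j + 1 := fun j => by simp [word, j.isLt]
  have word_succ : ∀ j : Fin (m + 1), (j : ℕ) < m → word σ (j + 1) = σ (finRotate _ j) + 1 :=
    fun j hj => by
      have hrot : ((finRotate _ j : Fin (m + 1)) : ℕ) = j + 1 :=
        coe_finRotate_of_ne_last (Fin.ne_of_val_ne (by rw [Fin.val_last]; omega))
      rw [← hrot, word_val]
  rw [des, ← card_map Fin.valEmbedding]
  congr 1
  ext i
  rw [descentSet, mem_filter, mem_range, mem_map]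
  simp only [mem_filter, mem_univ, true_and, Fin.valEmbedding_apply]
  constructor
  · rintro ⟨j, ⟨hj, hdesc⟩, rfl⟩
    rw [word_succ j (by omega), word_val]
    exact ⟨by omega, Nat.succ_lt_succ hdesc⟩
  · rintro ⟨hi, hdesc⟩
    refine ⟨⟨i, by omega⟩, ⟨by simpa using hi, ?_⟩, rfl⟩
    rw [word_succ ⟨i, by omega⟩ hi, word_val ⟨i, by omega⟩] at hdesc
    exact Fin.lt_def.2 (Nat.lt_of_succ_lt_succ hdesc)

lemma des_add_one_eq_ascRuns (hn : 1 ≤ n) (σ : Perm (Fin n)) : des σ + 1 = ascRuns σ := by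
  obtain ⟨m, rfl⟩ : ∃ m, n = m + 1 := ⟨n - 1, by omega⟩
  rw [des_eq_card_descentSet, ascRuns, card_descentSet_succ, if_pos]
  simp [word]

/-- The word of `σ` with the new largest letter inserted at position `p`. -/
def ins (σ : Perm (Fin n)) (p : Fin (n + 1)) : Perm (Fin (n + 1)) :=
  (finSuccEquiv' p).trans (σ.optionCongr.trans (finSuccEquiv' (Fin.last n)).symm)

lemma ins_self (σ : Perm (Fin n)) (p : Fin (n + 1)) : ins σ p p = Fin.last n := by
  simp [ins, finSuccEquiv'_at]

lemma ins_succAbove (σ : Perm (Fin n)) (p : Fin (n + 1)) (j : Fin n) :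
    ins σ p (p.succAbove j) = (σ j).castSucc := by
  simp [ins, finSuccEquiv'_succAbove, finSuccEquiv'_symm_some, Fin.succAbove_last]

lemma ins_injective :
    Function.Injective fun x : Perm (Fin n) × Fin (n + 1) => ins x.1 x.2 := by
  rintro ⟨σ, p⟩ ⟨σ', p'⟩ h
  have ins_symm_last : ∀ τ q, (ins τ q).symm (Fin.last n) = q := fun τ q =>
    (ins τ q).symm_apply_eq.2 (ins_self τ q).symm
  obtain rfl : p = p' := by
    rw [← ins_symm_last σ p, ← ins_symm_last σ' p']
    exact congrArg (fun τ : Perm (Fin (n + 1)) => τ.symm (Fin.last n)) h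
  obtain rfl : σ = σ' := Equiv.ext fun j => Fin.castSucc_injective n <| by
    rw [← ins_succAbove, ← ins_succAbove]
    exact congrArg (fun τ : Perm (Fin (n + 1)) => τ (p.succAbove j)) h
  rfl

lemma ins_bijective :
    Function.Bijective fun x : Perm (Fin n) × Fin (n + 1) => ins x.1 x.2 := by
  rw [Fintype.bijective_iff_injective_and_card]
  refine ⟨ins_injective, ?_⟩
  simp [Fintype.card_perm, Nat.factorial_succ, mul_comm]

lemma word_ins_of_lt (σ : Perm (Fin n)) (p : Fin (n + 1)) {i : ℕ} (h : i < p) :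
    word (ins σ p) i = word σ i := by
  have hi : i < n := by omega
  have hpos : (⟨i, by omega⟩ : Fin (n + 1)) = p.succAbove ⟨i, hi⟩ :=
    (Fin.succAbove_of_castSucc_lt p ⟨i, hi⟩ (Fin.lt_def.2 h)).symm
  simp [word, hi, show i < n + 1 by omega, hpos, ins_succAbove]

lemma word_ins_self (σ : Perm (Fin n)) (p : Fin (n + 1)) : word (ins σ p) p = n + 1 := by
  simp [word, ins_self, Fin.is_le]

lemma word_ins_of_gt (σ : Perm (Fin n)) (p : Fin (n + 1)) {i : ℕ} (h : p < i) :
    word (ins σ p) i = word σ (i - 1) := by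
  by_cases hi : i ≤ n
  · have hpos : (⟨i, by omega⟩ : Fin (n + 1)) = p.succAbove ⟨i - 1, by omega⟩ := by
      rw [Fin.succAbove_of_le_castSucc p ⟨i - 1, by omega⟩ (Fin.le_def.2 (show (p : ℕ) ≤ i - 1 by omega))]
      exact Fin.ext (show i = i - 1 + 1 by omega)
    simp [word, show i < n + 1 by omega, show i - 1 < n by omega, hpos, ins_succAbove]
  · simp [word, show ¬ i < n + 1 by omega, show ¬ i - 1 < n by omega]

lemma ascRuns_ins (σ : Perm (Fin n)) (p : Fin (n + 1)) :
    ascRuns (ins σ p) = if (p : ℕ) ∈ (descentSet (word σ) n).image (· + 1)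
      then ascRuns σ else ascRuns σ + 1 := by
  have h := card_descentSet_insert (word_lt σ) (fun i hi => word_ins_of_lt σ p hi)
    (word_ins_self σ p) (fun i hi => word_ins_of_gt σ p hi) (n - p)
  rw [Nat.add_sub_cancel' p.is_le] at h
  rw [ascRuns, ascRuns, h]
  exact if_congr (mem_image_add_one_descentSet_iff p.is_le).symm rfl rfl

lemma sum_ascRuns_ins (σ : Perm (Fin n)) (F : ℕ → M) :
    ∑ p : Fin (n + 1), F (ascRuns (ins σ p)) = eulerianStep n F (ascRuns σ) := by
  have hS : (descentSet (word σ) n).image (· + 1) ⊆ range (n + 1) := by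
    intro p hp
    simp only [descentSet, mem_image, mem_filter, mem_range] at hp ⊢
    omega
  simp_rw [ascRuns_ins, apply_ite F]
  rw [sum_fin_ite_val_mem hS, card_image_of_injective _ (add_left_injective 1)]
  rfl

lemma sum_perm_succ (F : ℕ → M) :
    ∑ τ : Perm (Fin (n + 1)), F (ascRuns τ)
      = ∑ σ : Perm (Fin n), eulerianStep n F (ascRuns σ) := by
  rw [← Fintype.sum_bijective _ ins_bijective (fun x => F (ascRuns (ins x.1 x.2))) _
    fun _ => rfl, Fintype.sum_prod_type]
  simp_rw [sum_ascRuns_ins]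

end Permutations

section InversionSequences

variable {n : ℕ}

lemma dst_snoc (e : InvSeq n) (v : Fin (n + 1)) :
    dst (Fin.snoc (α := fun i : Fin (n + 1) => Fin (i + 1)) e v)
      = if (v : ℕ) ∈ univ.image (fun i => (e i : ℕ)) then dst e else dst e + 1 := by
  have himage :
      univ.image (fun i => (Fin.snoc (α := fun i : Fin (n + 1) => Fin (i + 1)) e v i : ℕ))
        = insert (v : ℕ) (univ.image fun i => (e i : ℕ)) := by
    rw [Fin.univ_castSuccEmb, cons_eq_insert, image_insert, map_eq_image, image_image]
    simp [Function.comp_def]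
  rw [dst, himage, dst]
  split_ifs with h
  · rw [insert_eq_of_mem h]
  · rw [card_insert_of_notMem h]

lemma image_val_subset_range (e : InvSeq n) : univ.image (fun i => (e i : ℕ)) ⊆ range n := by
  intro a ha
  obtain ⟨i, -, rfl⟩ := mem_image.1 ha
  exact mem_range.2 (lt_of_lt_of_le (e i).isLt i.isLt)

lemma sum_dst_snoc (e : InvSeq n) (F : ℕ → M) :
    ∑ v : Fin (n + 1), F (dst (Fin.snoc (α := fun i : Fin (n + 1) => Fin (i + 1)) e v))
      = eulerianStep n F (dst e) := by
  simp_rw [dst_snoc, apply_ite F]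
  rw [sum_fin_ite_val_mem ((image_val_subset_range e).trans (range_subset_range.2 n.le_succ))]
  rfl

lemma sum_invSeq_succ (F : ℕ → M) :
    ∑ e : InvSeq (n + 1), F (dst e) = ∑ e : InvSeq n, eulerianStep n F (dst e) := by
  rw [← (Fin.snocEquiv fun i : Fin (n + 1) => Fin (i + 1)).sum_comp, Fintype.sum_prod_type_right]
  exact Fintype.sum_congr _ _ fun e => sum_dst_snoc e F

end InversionSequences

theorem sum_comp_ascRuns_eq_sum_comp_dst (n : ℕ) (F : ℕ → M) :
    ∑ σ : Perm (Fin n), F (ascRuns σ) = ∑ e : InvSeq n, F (dst e) := by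
  induction n generalizing F with
  | zero =>
    rw [Fintype.sum_unique, Fintype.sum_unique]
    rfl
  | succ n ih => rw [sum_perm_succ, ih, sum_invSeq_succ]

end Dumont

/-- Dumont: the distinct-entries statistic on inversion sequences is Eulerian. -/
theorem stmt_19 (n : ℕ) (hn : 1 ≤ n) :
    eulerianPoly n = ∑ e : InvSeq n, Polynomial.X ^ dst e := by
  simp_rw [eulerianPoly, Dumont.des_add_one_eq_ascRuns hn]
  exact Dumont.sum_comp_ascRuns_eq_sum_comp_dst n _
end
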